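/- arXiv:2306.16416 — 5 statements merged into one kernel-verified Lean document; each statement's English description precedes it below -/
import Mathlib

section
/- Let q be a prime power with gcd(n, q) = 1, and suppose the group algebra F_q[C_n] is isomorphic as a ring to F_q ⊕ (⊕_{l | n, l > 1} F_{q^{d_l}}^{e_l}), where d_l is the multiplicative order of q modulo l and e_l = φ(l)/d_l. Then P(F_q[C_n]) = ((2q-1)/q²) · ∏_{l | n, l > 1} ((2q^{d_l} - 1)/q^{2 d_l})^{e_l}. -/
noncomputable def zeroProb (R : Type*) [Ring R] : ℚ :=
  (Nat.card {p : R × R // p.1 * p.2 = 0} : ℚ) / (Nat.card R : ℚ) ^ 2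

/-- The multiplicative order of `q` modulo `l`. -/
noncomputable def multOrd (q l : ℕ) : ℕ := orderOf ((q : ZMod l))

lemma zeroProb_congr {R S : Type*} [Ring R] [Ring S] (e : R ≃+* S) :
    zeroProb R = zeroProb S := by
  unfold zeroProb
  have h1 : Nat.card R = Nat.card S := Nat.card_congr e.toEquiv
  have h2 : Nat.card {p : R × R // p.1 * p.2 = 0}
      = Nat.card {p : S × S // p.1 * p.2 = 0} := by
    refine Nat.card_congr (Equiv.subtypeEquiv (e.toEquiv.prodCongr e.toEquiv) ?_)
    intro p
    show p.1 * p.2 = 0 ↔ e p.1 * e p.2 = 0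
    rw [← map_mul, map_eq_zero_iff e e.injective]
  rw [h1, h2]

lemma zeroProb_prod (R S : Type*) [Ring R] [Ring S] :
    zeroProb (R × S) = zeroProb R * zeroProb S := by
  unfold zeroProb
  have h2 : Nat.card {p : (R × S) × (R × S) // p.1 * p.2 = 0}
      = Nat.card {p : R × R // p.1 * p.2 = 0} * Nat.card {p : S × S // p.1 * p.2 = 0} := by
    rw [← Nat.card_prod]
    refine Nat.card_congr ?_
    refine Equiv.trans (Equiv.subtypeEquiv (Equiv.prodProdProdComm R S R S) ?_)
      (Equiv.subtypeProdEquivProd (p := fun p : R × R => p.1 * p.2 = 0)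
        (q := fun p : S × S => p.1 * p.2 = 0))
    intro p
    simp [Equiv.prodProdProdComm, Prod.ext_iff]
  rw [h2, Nat.card_prod]
  push_cast
  rw [mul_pow]
  rw [div_mul_div_comm]

lemma zeroProb_pi {ι : Type*} [Fintype ι] (R : ι → Type*) [∀ i, Ring (R i)] :
    zeroProb (∀ i, R i) = ∏ i, zeroProb (R i) := by
  unfold zeroProb
  have h2 : Nat.card {p : (∀ i, R i) × (∀ i, R i) // p.1 * p.2 = 0}
      = ∏ i, Nat.card {p : R i × R i // p.1 * p.2 = 0} := by
    rw [← Nat.card_pi]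
    refine Nat.card_congr ⟨fun p i => ⟨(p.1.1 i, p.1.2 i), congrFun p.2 i⟩,
      fun f => ⟨(fun i => (f i).1.1, fun i => (f i).1.2), funext fun i => (f i).2⟩,
      fun p => rfl, fun f => rfl⟩
  rw [h2, Nat.card_pi]
  push_cast
  rw [Finset.prod_div_distrib, Finset.prod_pow]

lemma zeroProb_field (K : Type*) [Field K] [Fintype K] :
    zeroProb K = (2 * (Fintype.card K : ℚ) - 1) / (Fintype.card K : ℚ) ^ 2 := by
  classical
  have hcard : Nat.card {p : K × K // p.1 * p.2 = 0} = 2 * Fintype.card K - 1 := by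
    rw [Nat.card_eq_fintype_card, Fintype.card_subtype]
    have hfil : (Finset.univ.filter fun p : K × K => p.1 * p.2 = 0)
        = ({0} ×ˢ Finset.univ) ∪ (Finset.univ ×ˢ {0}) := by
      ext p
      simp only [Finset.mem_filter, Finset.mem_union, Finset.mem_product,
        Finset.mem_singleton, Finset.mem_univ, true_and, and_true, mul_eq_zero]
    rw [hfil]
    have hinter : (({0} : Finset K) ×ˢ (Finset.univ : Finset K))
        ∩ ((Finset.univ : Finset K) ×ˢ ({0} : Finset K))
        = ({0} : Finset K) ×ˢ ({0} : Finset K) := by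
      ext p
      simp only [Finset.mem_inter, Finset.mem_product, Finset.mem_singleton,
        Finset.mem_univ, true_and, and_true]
    have := Finset.card_union_add_card_inter
      (({0} : Finset K) ×ˢ (Finset.univ : Finset K))
      ((Finset.univ : Finset K) ×ˢ ({0} : Finset K))
    rw [hinter] at this
    simp only [Finset.card_product, Finset.card_singleton, Finset.card_univ,
      one_mul, mul_one] at this ⊢
    omega
  have hK : 1 ≤ Fintype.card K := Fintype.card_pos
  unfold zeroProb
  rw [hcard, Nat.card_eq_fintype_card]
  congr 1
  push_cast [Nat.cast_sub (by omega : 1 ≤ 2 * Fintype.card K)]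
  ring

theorem zeroProb_cyclic (F : Type*) [Field F] [Fintype F] (n : ℕ) (hn : 0 < n)
    (hq : Nat.gcd n (Fintype.card F) = 1)
    (K : ℕ → Type*) [∀ l, Field (K l)] [∀ l, Fintype (K l)]
    (hK : ∀ l ∈ n.divisors, 1 < l →
      Fintype.card (K l) = Fintype.card F ^ multOrd (Fintype.card F) l)
    (iso : MonoidAlgebra F (Multiplicative (ZMod n)) ≃+*
      F × (∀ l : {l : ℕ // l ∈ n.divisors ∧ 1 < l},
        Fin (Nat.totient l / multOrd (Fintype.card F) l) → K l)) :
    zeroProb (MonoidAlgebra F (Multiplicative (ZMod n))) =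
      ((2 * (Fintype.card F : ℚ) - 1) / (Fintype.card F : ℚ) ^ 2) *
        ∏ l ∈ n.divisors.filter (fun l => 1 < l),
          ((2 * (Fintype.card F : ℚ) ^ multOrd (Fintype.card F) l - 1) /
            (Fintype.card F : ℚ) ^ (2 * multOrd (Fintype.card F) l)) ^
              (Nat.totient l / multOrd (Fintype.card F) l) := by
  classical
  haveI : Fintype {l : ℕ // l ∈ n.divisors ∧ 1 < l} :=
    Fintype.subtype (n.divisors.filter fun l => 1 < l) (by intro x; simp)
  rw [zeroProb_congr iso, zeroProb_prod, zeroProb_field F]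
  congr 1
  rw [zeroProb_pi]
  rw [Finset.prod_subtype (n.divisors.filter fun l => 1 < l)
    (p := fun l => l ∈ n.divisors ∧ 1 < l) (by intro x; simp)
    (fun l => ((2 * (Fintype.card F : ℚ) ^ multOrd (Fintype.card F) l - 1) /
            (Fintype.card F : ℚ) ^ (2 * multOrd (Fintype.card F) l)) ^
              (Nat.totient l / multOrd (Fintype.card F) l))]
  refine Finset.prod_congr rfl fun l _ => ?_
  rw [zeroProb_pi, Finset.prod_const, zeroProb_field, Finset.card_univ, Fintype.card_fin]
  congr 2
  · rw [hK l l.2.1 l.2.2]; push_cast; ring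
  · rw [hK l l.2.1 l.2.2]; push_cast; rw [← pow_mul, mul_comm]
end

section
/- Let R = M₂(F_q). Then |{(a,b) ∈ R × R : a*b = 0}| = q⁴ + q(q³ - q² - q + 1) + q²(q³ + q² - q - 1), and consequently P_l(R) := |{(a,b) : ab = 0}|/|R|² = (q⁴ + 3q³ - 2q² - 2q + 1)/q⁷. -/
open Matrix

theorem natCard_prod_mul_eq_zero (R : Type*) [Mul R] [Zero R] [Fintype R] :
    Nat.card {p : R × R // p.1 * p.2 = 0} = ∑ b : R, Nat.card {a : R // a * b = 0} := by
  rw [← Nat.card_sigma]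
  exact Nat.card_congr ((Equiv.prodComm R R).subtypeEquiv (fun _ => Iff.rfl) |>.trans
    (Equiv.subtypeProdEquivSigmaSubtype fun b a => a * b = 0))

theorem sum_eq_of_eq_on_zero_units_nonunits {M S : Type*} [MonoidWithZero M] [Nontrivial M]
    [Fintype M] [CommRing S] {f : M → S} {z u c : S} (h0 : f 0 = z)
    (hu : ∀ x, IsUnit x → f x = u) (hc : ∀ x, x ≠ 0 → ¬IsUnit x → f x = c) :
    ∑ x, f x = z + Nat.card Mˣ * u + (Nat.card M - 1 - Nat.card Mˣ) * c := by
  classical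
  have hf : ∀ x, f x = c + (if x = 0 then z - c else 0) + (if IsUnit x then u - c else 0) := by
    intro x
    by_cases hx0 : x = 0
    · simp [hx0, h0]
    by_cases hxu : IsUnit x
    · simp [hx0, hxu, hu]
    · simp [hx0, hxu, hc]
  have hunits : Nat.card {x : M // IsUnit x} = Nat.card Mˣ :=
    Nat.card_congr Submonoid.unitsTypeEquivIsUnitSubmonoid.toEquiv.symm
  simp only [hf, Finset.sum_add_distrib, Finset.sum_ite_eq', Finset.mem_univ, if_true,
    Finset.sum_const, Finset.sum_ite, nsmul_eq_mul]
  rw [Finset.card_univ, ← Nat.card_eq_fintype_card, ← Fintype.card_subtype,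
    ← Nat.card_eq_fintype_card, hunits]
  ring

namespace Matrix

variable {l m n R K : Type*}

theorem natCard_mul_eq_zero_eq_pow [Fintype m] [Finite l] [Semiring R] (b : Matrix m n R) :
    Nat.card {a : Matrix l m R // a * b = 0} =
      Nat.card {v : m → R // v ᵥ* b = 0} ^ Nat.card l := by
  rw [← Nat.card_fun]
  refine Nat.card_congr ((Equiv.subtypeEquivRight fun a => ?_).trans Equiv.subtypePiEquivPi)
  simp only [← Matrix.ext_iff, ← mul_apply_eq_vecMul, funext_iff, zero_apply, Pi.zero_apply]

variable [Field K]

theorem rank_eq_zero_iff [Fintype n] {b : Matrix m n K} : b.rank = 0 ↔ b = 0 := by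
  classical
  rw [rank, Submodule.finrank_eq_zero, LinearMap.range_eq_bot, ← toLin'_apply',
    LinearEquiv.map_eq_zero_iff]

theorem rank_eq_card_iff_isUnit [Fintype n] [DecidableEq n] {b : Matrix n n K} :
    b.rank = Fintype.card n ↔ IsUnit b := by
  refine ⟨fun h => ?_, rank_of_isUnit b⟩
  rw [← mulVec_surjective_iff_isUnit, ← coe_mulVecLin, ← LinearMap.range_eq_top]
  apply Submodule.eq_top_of_finrank_eq
  rwa [Module.finrank_fintype_fun_eq_card]

theorem natCard_vecMul_eq_zero [Fintype m] [Fintype n] [Finite K] (b : Matrix m n K) :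
    Nat.card {v : m → K // v ᵥ* b = 0} = Nat.card K ^ (Fintype.card m - b.rank) := by
  have h := LinearMap.finrank_range_add_finrank_ker b.vecMulLinear
  rw [← mulVecLin_transpose, ← rank, rank_transpose, Module.finrank_fintype_fun_eq_card,
    mulVecLin_transpose] at h
  rw [← h, Nat.add_sub_cancel_left, ← Module.natCard_eq_pow_finrank]
  rfl

theorem natCard_mul_eq_zero [Fintype m] [Fintype n] [Finite l] [Finite K] (b : Matrix m n K) :
    Nat.card {a : Matrix l m K // a * b = 0} =
      Nat.card K ^ (Nat.card l * (Fintype.card m - b.rank)) := by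
  rw [natCard_mul_eq_zero_eq_pow, natCard_vecMul_eq_zero, ← pow_mul, mul_comm]

open Classical in
theorem natCard_mul_eq_zero_fin_two [Finite K] (b : Matrix (Fin 2) (Fin 2) K) :
    Nat.card {a : Matrix (Fin 2) (Fin 2) K // a * b = 0} =
      if b = 0 then Nat.card K ^ 4 else if IsUnit b then 1 else Nat.card K ^ 2 := by
  rw [natCard_mul_eq_zero, Nat.card_fin, Fintype.card_fin]
  split_ifs with h0 hu
  · simp [h0]
  · simp [rank_of_isUnit b hu]
  · have hb := b.rank_le_card_width
    have hb0 := rank_eq_zero_iff.not.2 h0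
    have hb2 := rank_eq_card_iff_isUnit.not.2 hu
    rw [Fintype.card_fin] at hb hb2
    simp [show b.rank = 1 by omega]

end Matrix

theorem count_zero_pairs_M2 (F : Type*) [Field F] [Fintype F] :
    (Nat.card {p : Matrix (Fin 2) (Fin 2) F × Matrix (Fin 2) (Fin 2) F //
        p.1 * p.2 = 0} : ℚ) =
      (Fintype.card F : ℚ) ^ 4 +
        (Fintype.card F : ℚ) * ((Fintype.card F : ℚ) ^ 3 - (Fintype.card F : ℚ) ^ 2 -
          (Fintype.card F : ℚ) + 1) +
        (Fintype.card F : ℚ) ^ 2 * ((Fintype.card F : ℚ) ^ 3 + (Fintype.card F : ℚ) ^ 2 -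
          (Fintype.card F : ℚ) - 1) ∧
    zeroProb (Matrix (Fin 2) (Fin 2) F) =
      ((Fintype.card F : ℚ) ^ 4 + 3 * (Fintype.card F : ℚ) ^ 3 - 2 * (Fintype.card F : ℚ) ^ 2 -
        2 * (Fintype.card F : ℚ) + 1) / (Fintype.card F : ℚ) ^ 7 := by
  set q := Fintype.card F
  have hcard : (Nat.card (Matrix (Fin 2) (Fin 2) F) : ℚ) = q ^ 4 := by
    simp [Matrix, q, ← pow_mul]
  have hunits : (Nat.card (Matrix (Fin 2) (Fin 2) F)ˣ : ℚ) = (q ^ 2 - 1) * (q ^ 2 - q) := by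
    have h := card_GL_field (𝔽 := F) 2
    simp only [Fin.prod_univ_two, Fin.val_zero, Fin.val_one, pow_zero, pow_one] at h
    rw [h, Nat.cast_mul, Nat.cast_sub (Nat.one_le_pow _ _ Fintype.card_pos),
      Nat.cast_sub (Nat.le_self_pow two_ne_zero q)]
    push_cast
    ring
  have hcount : (Nat.card {p : Matrix (Fin 2) (Fin 2) F × Matrix (Fin 2) (Fin 2) F //
      p.1 * p.2 = 0} : ℚ) =
        q ^ 4 + q * (q ^ 3 - q ^ 2 - q + 1) + q ^ 2 * (q ^ 3 + q ^ 2 - q - 1) := by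
    rw [natCard_prod_mul_eq_zero, Nat.cast_sum,
      sum_eq_of_eq_on_zero_units_nonunits (z := (q : ℚ) ^ 4) (u := 1) (c := (q : ℚ) ^ 2),
      hcard, hunits]
    · ring
    · rw [natCard_mul_eq_zero_fin_two, if_pos rfl]
      simp [q]
    · intro x hx
      simp [natCard_mul_eq_zero_fin_two, hx, hx.ne_zero]
    · intro x hx0 hxu
      simp [natCard_mul_eq_zero_fin_two, hx0, hxu, q]
  refine ⟨hcount, ?_⟩
  rw [zeroProb, hcount, hcard]
  field_simp
  ring
end

section
/- Let R = M₂(F_q). For every nonzero zero divisor x ∈ R, the two-sided annihilator Ann(x) = {α ∈ R : αx = 0 and xα = 0} has exactly q elements. -/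
open Matrix

theorem card_two_sided_annihilator (F : Type*) [Field F] [Fintype F]
    (x : Matrix (Fin 2) (Fin 2) F) (hx : x ≠ 0) (hxu : ¬IsUnit x) :
    Nat.card {α : Matrix (Fin 2) (Fin 2) F // α * x = 0 ∧ x * α = 0} = Fintype.card F := by
  have hdet : x.det = 0 := by
    by_contra h
    exact hxu ((Matrix.isUnit_iff_isUnit_det x).2 (isUnit_iff_ne_zero.2 h))
  obtain ⟨a, b, c, d, hxe⟩ : ∃ a b c d, x = !![a, b; c, d] :=
    ⟨x 0 0, x 0 1, x 1 0, x 1 1, Matrix.eta_fin_two x⟩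
  subst hxe
  have hD' : a * d - b * c = 0 := by
    rw [Matrix.det_fin_two] at hdet
    simpa using hdet
  set y : Matrix (Fin 2) (Fin 2) F := !![d, -b; -c, a] with hy
  have hyne : y ≠ 0 := by
    intro h
    apply hx
    have h00 := congrFun (congrFun h 0) 0
    have h01 := congrFun (congrFun h 0) 1
    have h10 := congrFun (congrFun h 1) 0
    have h11 := congrFun (congrFun h 1) 1
    simp [hy] at h00 h01 h10 h11
    ext i j
    fin_cases i <;> fin_cases j <;> simp [h00, h01, h10, h11]
  have hyx : y * !![a, b; c, d] = 0 := by
    ext i j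
    rw [Matrix.mul_apply, Fin.sum_univ_two]
    fin_cases i <;> fin_cases j <;> simp [hy] <;> ring_nf <;>
      first | rfl | linear_combination hD' | linear_combination -hD'
  have hxy : !![a, b; c, d] * y = 0 := by
    ext i j
    rw [Matrix.mul_apply, Fin.sum_univ_two]
    fin_cases i <;> fin_cases j <;> simp [hy] <;> ring_nf <;>
      first | rfl | linear_combination hD' | linear_combination -hD'
  have hf1 : ∀ t : F, (t • y) * !![a, b; c, d] = 0 := fun t => by
    rw [Matrix.smul_mul, hyx, smul_zero]
  have hf2 : ∀ t : F, !![a, b; c, d] * (t • y) = 0 := fun t => by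
    rw [Matrix.mul_smul, hxy, smul_zero]
  let f : F → {α : Matrix (Fin 2) (Fin 2) F // α * !![a, b; c, d] = 0 ∧ !![a, b; c, d] * α = 0} :=
    fun t => ⟨t • y, hf1 t, hf2 t⟩
  have hfb : Function.Bijective f := by
    constructor
    · intro s t hst
      have h1 : s • y = t • y := congrArg Subtype.val hst
      have h2 : (s - t) • y = 0 := by rw [sub_smul, h1, sub_self]
      rcases smul_eq_zero.1 h2 with h3 | h3
      · exact sub_eq_zero.1 h3
      · exact absurd h3 hyne
    · rintro ⟨α, h1, h2⟩
      obtain ⟨p, q, r, s, hαe⟩ : ∃ p q r s, α = !![p, q; r, s] :=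
        ⟨α 0 0, α 0 1, α 1 0, α 1 1, Matrix.eta_fin_two α⟩
      subst hαe
      have A1 : p * a + q * c = 0 := by
        have := congrFun (congrFun h1 0) 0
        rw [Matrix.mul_apply, Fin.sum_univ_two] at this
        simpa using this
      have A2 : p * b + q * d = 0 := by
        have := congrFun (congrFun h1 0) 1
        rw [Matrix.mul_apply, Fin.sum_univ_two] at this
        simpa using this
      have A3 : r * a + s * c = 0 := by
        have := congrFun (congrFun h1 1) 0
        rw [Matrix.mul_apply, Fin.sum_univ_two] at this
        simpa using this
      have A4 : r * b + s * d = 0 := by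
        have := congrFun (congrFun h1 1) 1
        rw [Matrix.mul_apply, Fin.sum_univ_two] at this
        simpa using this
      have B1 : a * p + b * r = 0 := by
        have := congrFun (congrFun h2 0) 0
        rw [Matrix.mul_apply, Fin.sum_univ_two] at this
        simpa using this
      have B2 : a * q + b * s = 0 := by
        have := congrFun (congrFun h2 0) 1
        rw [Matrix.mul_apply, Fin.sum_univ_two] at this
        simpa using this
      have B3 : c * p + d * r = 0 := by
        have := congrFun (congrFun h2 1) 0
        rw [Matrix.mul_apply, Fin.sum_univ_two] at this
        simpa using this
      have B4 : c * q + d * s = 0 := by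
        have := congrFun (congrFun h2 1) 1
        rw [Matrix.mul_apply, Fin.sum_univ_two] at this
        simpa using this
      ring_nf at A1 A2 A3 A4 B1 B2 B3 B4 hD'
      have key : ∃ t : F, p = t * d ∧ q = t * (-b) ∧ r = t * (-c) ∧ s = t * a := by
        by_cases ha : a ≠ 0
        · refine ⟨s / a, ?_, ?_, ?_, ?_⟩
          · have h5 : a * (p * a - s * d) = 0 := by
              linear_combination a * A1 - c * B2 - s * hD'
            have h6 := (mul_eq_zero.1 h5).resolve_left ha
            field_simp
            linear_combination h6
          · field_simp
            linear_combination B2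
          · field_simp
            linear_combination A3
          · field_simp
        · push_neg at ha
          by_cases hb : b ≠ 0
          · refine ⟨-q / b, ?_, ?_, ?_, ?_⟩
            · field_simp
              linear_combination A2
            · field_simp
            · field_simp
              linear_combination B1 - A1
            · field_simp
              linear_combination B2
          · push_neg at hb
            by_cases hc : c ≠ 0
            · refine ⟨-r / c, ?_, ?_, ?_, ?_⟩
              · field_simp
                linear_combination B3
              · field_simp
                linear_combination A1 - p * ha - r * hb
              · field_simp
              · field_simp
                linear_combination A3
            · push_neg at hc
              have hd : d ≠ 0 := by
                intro hd
                apply hx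
                ext i j
                fin_cases i <;> fin_cases j <;> simp [ha, hb, hc, hd]
              refine ⟨p / d, ?_, ?_, ?_, ?_⟩
              · field_simp
              · field_simp
                linear_combination A2
              · field_simp
                linear_combination B3
              · field_simp
                linear_combination A4 - r * hb - p * ha
      obtain ⟨t, h1', h2', h3', h4'⟩ := key
      refine ⟨t, ?_⟩
      apply Subtype.ext
      show t • y = !![p, q; r, s]
      ext i j
      fin_cases i <;> fin_cases j <;>
        simp [hy, h1', h2', h3', h4'] <;> ring
  rw [Nat.card_congr (Equiv.ofBijective f hfb).symm, Nat.card_eq_fintype_card]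
end

section
/- Let R = M₂(F_q) and define P(R) = (|R| + |U(R)| + Σ_{x ∈ ZD(R)} |Ann(x)|)/|R|², where U(R) is the unit group, ZD(R) the set of nonzero zero divisors, and Ann(x) the two-sided annihilator. Then P(R) = (3q² - 2)/q⁶. -/
open Matrix

section Aux

variable {F : Type*} [Field F] [Fintype F]

omit [Fintype F] in
private lemma adj_ne_zero' (x : Matrix (Fin 2) (Fin 2) F) (hx : x ≠ 0) : x.adjugate ≠ 0 := by
  intro h
  apply hx
  have h2 : x.adjugate.adjugate = x := by rw [adjugate_adjugate' x]; simp
  rw [← h2, h, adjugate_zero]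

omit [Fintype F] in
private lemma ann_span' (x α : Matrix (Fin 2) (Fin 2) F)
    (h1 : α * x = 0) (h2 : x * α = 0) (hx : x ≠ 0) :
    ∃ t : F, α = t • x.adjugate := by
  have A : ∀ i j, α i 0 * x 0 j + α i 1 * x 1 j = 0 := by
    intro i j
    have := congrFun (congrFun h1 i) j
    simpa [Matrix.mul_apply, Fin.sum_univ_two] using this
  have B : ∀ i j, x i 0 * α 0 j + x i 1 * α 1 j = 0 := by
    intro i j
    have := congrFun (congrFun h2 i) j
    simpa [Matrix.mul_apply, Fin.sum_univ_two] using this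
  obtain ⟨i, j, hij⟩ : ∃ i j, x i j ≠ 0 := by
    by_contra h
    push_neg at h
    exact hx (Matrix.ext fun i j => by simpa using h i j)
  rw [adjugate_fin_two]
  fin_cases i <;> fin_cases j <;> simp only [Fin.zero_eta, Fin.mk_one, Fin.isValue] at hij
  · refine ⟨α 1 1 / x 0 0, ?_⟩
    ext i j
    fin_cases i <;> fin_cases j
    · simp only [Matrix.smul_apply, smul_eq_mul]; simp
      field_simp
      linear_combination A 0 0 - B 1 1
    · simp only [Matrix.smul_apply, smul_eq_mul]; simp
      field_simp
      linear_combination B 0 1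
    · simp only [Matrix.smul_apply, smul_eq_mul]; simp
      field_simp
      linear_combination A 1 0
    · simp only [Matrix.smul_apply, smul_eq_mul]; simp
      field_simp
  · refine ⟨-(α 0 1 / x 0 1), ?_⟩
    ext i j
    fin_cases i <;> fin_cases j
    · simp only [Matrix.smul_apply, smul_eq_mul]; simp
      field_simp
      linear_combination A 0 1
    · simp only [Matrix.smul_apply, smul_eq_mul]; simp
      field_simp
    · simp only [Matrix.smul_apply, smul_eq_mul]; simp
      field_simp
      linear_combination B 0 0 - A 0 0
    · simp only [Matrix.smul_apply, smul_eq_mul]; simp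
      field_simp
      linear_combination B 0 1
  · refine ⟨-(α 1 0 / x 1 0), ?_⟩
    ext i j
    fin_cases i <;> fin_cases j
    · simp only [Matrix.smul_apply, smul_eq_mul]; simp
      field_simp
      linear_combination B 1 0
    · simp only [Matrix.smul_apply, smul_eq_mul]; simp
      field_simp
      linear_combination A 0 0 - B 0 0
    · simp only [Matrix.smul_apply, smul_eq_mul]; simp
      field_simp
    · simp only [Matrix.smul_apply, smul_eq_mul]; simp
      field_simp
      linear_combination A 1 0
  · refine ⟨α 0 0 / x 1 1, ?_⟩
    ext i j
    fin_cases i <;> fin_cases j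
    · simp only [Matrix.smul_apply, smul_eq_mul]; simp
      field_simp
    · simp only [Matrix.smul_apply, smul_eq_mul]; simp
      field_simp
      linear_combination A 0 1
    · simp only [Matrix.smul_apply, smul_eq_mul]; simp
      field_simp
      linear_combination B 1 0
    · simp only [Matrix.smul_apply, smul_eq_mul]; simp
      field_simp
      linear_combination B 1 1 - A 0 0

private lemma card_ann (x : Matrix (Fin 2) (Fin 2) F) (hx : x ≠ 0) (hd : x.det = 0) :
    Nat.card {α : Matrix (Fin 2) (Fin 2) F // α * x = 0 ∧ x * α = 0} = Fintype.card F := by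
  have hb : Function.Bijective
      (fun t : F => (⟨t • x.adjugate,
        by rw [smul_mul_assoc, adjugate_mul, hd, zero_smul, smul_zero],
        by rw [mul_smul_comm, mul_adjugate, hd, zero_smul, smul_zero]⟩ :
        {α : Matrix (Fin 2) (Fin 2) F // α * x = 0 ∧ x * α = 0})) := by
    constructor
    · intro t₁ t₂ h
      have h' : t₁ • x.adjugate = t₂ • x.adjugate := congrArg Subtype.val h
      have : (t₁ - t₂) • x.adjugate = 0 := by rw [sub_smul, h', sub_self]
      rcases smul_eq_zero.mp this with h0 | h0
      · exact sub_eq_zero.mp h0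
      · exact absurd h0 (adj_ne_zero' x hx)
    · rintro ⟨α, hα1, hα2⟩
      obtain ⟨t, ht⟩ := ann_span' x α hα1 hα2 hx
      exact ⟨t, Subtype.ext ht.symm⟩
  rw [← Nat.card_eq_fintype_card, Nat.card_congr (Equiv.ofBijective _ hb).symm]

omit [Fintype F] in
private lemma zd_iff (x : Matrix (Fin 2) (Fin 2) F) :
    (x ≠ 0 ∧ ∃ y ≠ (0 : Matrix (Fin 2) (Fin 2) F), x * y = 0 ∨ y * x = 0) ↔
      (x ≠ 0 ∧ x.det = 0) := by
  constructor
  · rintro ⟨hx, y, hy, hxy⟩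
    refine ⟨hx, ?_⟩
    by_contra hd
    have hu : IsUnit x.det := isUnit_iff_ne_zero.mpr hd
    apply hy
    rcases hxy with h | h
    · calc y = (x⁻¹ * x) * y := by rw [Matrix.nonsing_inv_mul x hu, one_mul]
        _ = x⁻¹ * (x * y) := by rw [mul_assoc]
        _ = 0 := by rw [h, mul_zero]
    · calc y = y * (x * x⁻¹) := by rw [Matrix.mul_nonsing_inv x hu, mul_one]
        _ = (y * x) * x⁻¹ := by rw [mul_assoc]
        _ = 0 := by rw [h, zero_mul]
  · rintro ⟨hx, hd⟩
    exact ⟨hx, x.adjugate, adj_ne_zero' x hx, Or.inl (by rw [mul_adjugate, hd, zero_smul])⟩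

private lemma card_M : Fintype.card (Matrix (Fin 2) (Fin 2) F) = Fintype.card F ^ 4 := by
  rw [Fintype.card_congr (Matrix.of (m := Fin 2) (n := Fin 2) (α := F)).symm]
  simp [Fintype.card_fun]
  ring

private lemma count_zd :
    Nat.card {x : Matrix (Fin 2) (Fin 2) F // x ≠ 0 ∧ x.det = 0} +
      (Nat.card (Matrix (Fin 2) (Fin 2) F)ˣ + 1) = Fintype.card F ^ 4 := by
  classical
  have e1 : (Matrix (Fin 2) (Fin 2) F)ˣ ≃ {x : Matrix (Fin 2) (Fin 2) F // x.det ≠ 0} :=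
    { toFun := fun u => ⟨u.1, by
        simpa [isUnit_iff_ne_zero] using (Matrix.isUnit_iff_isUnit_det _).mp u.isUnit⟩
      invFun := fun a => Matrix.nonsingInvUnit a.1 (isUnit_iff_ne_zero.mpr a.2)
      left_inv := fun u => Units.ext rfl
      right_inv := fun a => rfl }
  have e2 : {x : Matrix (Fin 2) (Fin 2) F // ¬(x ≠ 0 ∧ x.det = 0)} ≃
      ({x : Matrix (Fin 2) (Fin 2) F // x = 0} ⊕ {x : Matrix (Fin 2) (Fin 2) F // x.det ≠ 0}) := by
    refine (Equiv.subtypeEquivRight ?_).trans (subtypeOrEquiv _ _ ?_)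
    · intro x; by_cases h : x = 0 <;> by_cases h' : x.det = 0 <;> simp [h, h']
    · rintro p hp hq m hm
      have h1 : m = 0 := hp m hm
      have h2 : (m : Matrix (Fin 2) (Fin 2) F).det ≠ 0 := hq m hm
      subst h1
      simp at h2
  have hsplit := Fintype.card_congr
    (Equiv.sumCompl (fun x : Matrix (Fin 2) (Fin 2) F => x ≠ 0 ∧ x.det = 0)).symm
  rw [Fintype.card_sum, Fintype.card_congr e2, Fintype.card_sum, Fintype.card_subtype_eq,
    ← Fintype.card_congr e1, card_M] at hsplit
  rw [Nat.card_eq_fintype_card, Nat.card_eq_fintype_card]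
  omega

private lemma card_units :
    Nat.card (Matrix (Fin 2) (Fin 2) F)ˣ =
      (Fintype.card F ^ 2 - 1) * (Fintype.card F ^ 2 - Fintype.card F) := by
  have h : Nat.card (GL (Fin 2) F) = ∏ i : Fin 2, (Fintype.card F ^ 2 - Fintype.card F ^ (i : ℕ)) :=
    Matrix.card_GL_field 2
  rw [Fin.prod_univ_two] at h
  norm_num at h
  exact h

end Aux

open scoped Classical in
theorem two_sided_prob_M2 (F : Type*) [Field F] [Fintype F] :
    ((Nat.card (Matrix (Fin 2) (Fin 2) F) : ℚ) +
        (Nat.card (Matrix (Fin 2) (Fin 2) F)ˣ : ℚ) +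
        ∑ x : {x : Matrix (Fin 2) (Fin 2) F //
            x ≠ 0 ∧ ∃ y ≠ (0 : Matrix (Fin 2) (Fin 2) F), x * y = 0 ∨ y * x = 0},
          (Nat.card {α : Matrix (Fin 2) (Fin 2) F // α * x.1 = 0 ∧ x.1 * α = 0} : ℚ)) /
      (Nat.card (Matrix (Fin 2) (Fin 2) F) : ℚ) ^ 2 =
    (3 * (Fintype.card F : ℚ) ^ 2 - 2) / (Fintype.card F : ℚ) ^ 6 := by
  have hq1 : 1 ≤ Fintype.card F := Fintype.card_pos
  have hqQ : (0 : ℚ) < (Fintype.card F : ℚ) := by exact_mod_cast hq1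
  have hq0 : (Fintype.card F : ℚ) ≠ 0 := ne_of_gt hqQ
  -- cardinality of the matrix ring
  have hM : (Nat.card (Matrix (Fin 2) (Fin 2) F) : ℚ) = (Fintype.card F : ℚ) ^ 4 := by
    rw [Nat.card_eq_fintype_card, card_M]
    push_cast
    ring
  -- cardinality of the unit group
  have hUq : (Nat.card (Matrix (Fin 2) (Fin 2) F)ˣ : ℚ) =
      ((Fintype.card F : ℚ) ^ 2 - 1) * ((Fintype.card F : ℚ) ^ 2 - (Fintype.card F : ℚ)) := by
    rw [card_units]
    have h1 : 1 ≤ Fintype.card F ^ 2 := Nat.one_le_pow _ _ Fintype.card_pos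
    have h2 : Fintype.card F ≤ Fintype.card F ^ 2 := Nat.le_self_pow (by norm_num) _
    push_cast [Nat.cast_sub h1, Nat.cast_sub h2]
    ring
  -- the sum over zero divisors
  have hsum : ∑ x : {x : Matrix (Fin 2) (Fin 2) F //
      x ≠ 0 ∧ ∃ y ≠ (0 : Matrix (Fin 2) (Fin 2) F), x * y = 0 ∨ y * x = 0},
      (Nat.card {α : Matrix (Fin 2) (Fin 2) F // α * x.1 = 0 ∧ x.1 * α = 0} : ℚ) =
      (Nat.card {x : Matrix (Fin 2) (Fin 2) F // x ≠ 0 ∧ x.det = 0} : ℚ) *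
        (Fintype.card F : ℚ) := by
    have hterm : ∀ x : {x : Matrix (Fin 2) (Fin 2) F //
        x ≠ 0 ∧ ∃ y ≠ (0 : Matrix (Fin 2) (Fin 2) F), x * y = 0 ∨ y * x = 0},
        Nat.card {α : Matrix (Fin 2) (Fin 2) F // α * x.1 = 0 ∧ x.1 * α = 0} =
          Fintype.card F := by
      intro x
      obtain ⟨hx, hd⟩ := (zd_iff x.1).mp x.2
      exact card_ann x.1 hx hd
    calc (∑ x : {x : Matrix (Fin 2) (Fin 2) F //
        x ≠ 0 ∧ ∃ y ≠ (0 : Matrix (Fin 2) (Fin 2) F), x * y = 0 ∨ y * x = 0},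
        (Nat.card {α : Matrix (Fin 2) (Fin 2) F // α * x.1 = 0 ∧ x.1 * α = 0} : ℚ))
        = ∑ _x : {x : Matrix (Fin 2) (Fin 2) F //
            x ≠ 0 ∧ ∃ y ≠ (0 : Matrix (Fin 2) (Fin 2) F), x * y = 0 ∨ y * x = 0},
            (Fintype.card F : ℚ) :=
          Finset.sum_congr rfl (fun x _ => by rw [hterm x])
      _ = _ := by
          rw [Finset.sum_const, Finset.card_univ, nsmul_eq_mul, ← Nat.card_eq_fintype_card,
            Nat.card_congr (Equiv.subtypeEquivRight (fun x => zd_iff x))]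
  -- cardinality of nonzero singular matrices
  have hZD : (Nat.card {x : Matrix (Fin 2) (Fin 2) F // x ≠ 0 ∧ x.det = 0} : ℚ) =
      (Fintype.card F : ℚ) ^ 4 - (Nat.card (Matrix (Fin 2) (Fin 2) F)ˣ : ℚ) - 1 := by
    have h := congrArg (Nat.cast : ℕ → ℚ) (count_zd (F := F))
    push_cast at h
    linarith
  rw [hsum, hZD, hM, hUq]
  field_simp
  ring
end

section
/- Let F_q be a finite field with gcd(q, 6) = 1, and suppose F_q[S₃] ≅ F_q ⊕ F_q ⊕ M₂(F_q) as rings. Then P(F_q[S₃]) = ((2q-1)/q²)² · ((3q² - 2)/q⁶), where P counts pairs (a,b) with ab = 0 and ba = 0 in the commutative factors combined with two-sided annihilation in M₂(F_q) via P(R) = (|R| + |U(R)| + Σ_{x ∈ ZD(R)}|Ann(x)|)/|R|². -/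
open Finset

noncomputable section Utils

def unitsEquivIsUnit (R : Type*) [Monoid R] : Rˣ ≃ {x : R // IsUnit x} where
  toFun u := ⟨u, u.isUnit⟩
  invFun x := x.2.unit
  left_inv u := Units.ext u.isUnit.unit_spec
  right_inv x := Subtype.ext x.2.unit_spec

/-- in a finite monoid, a right inverse makes a unit -/
theorem isUnit_of_mul_eq_one_finite {R : Type*} [Monoid R] [Finite R] {x y : R}
    (h : x * y = 1) : IsUnit x := by
  have hinj : Function.Injective (fun z : R => x * z) := by
    have hsurj : Function.Surjective (fun z : R => x * z) := fun z => ⟨y * z, by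
      simp [← mul_assoc, h]⟩
    exact Finite.injective_iff_surjective.mpr hsurj
  have hyx : y * x = 1 := hinj (by simp [← mul_assoc, h])
  exact ⟨⟨x, y, h, hyx⟩, rfl⟩

/-- in a finite nontrivial ring, the "two-sided zero divisor" predicate equals nonzero nonunit -/
theorem zd_iff_s10 {R : Type*} [Ring R] [Finite R] {x : R} :
    (x ≠ 0 ∧ ∃ y ≠ (0 : R), x * y = 0 ∨ y * x = 0) ↔ (x ≠ 0 ∧ ¬ IsUnit x) := by
  constructor
  · rintro ⟨hx, y, hy, hxy⟩
    refine ⟨hx, fun hu => hy ?_⟩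
    rcases hxy with hxy | hyx
    · have : ((hu.unit⁻¹ : Rˣ) : R) * (x * y) = 0 := by rw [hxy, mul_zero]
      simpa [← mul_assoc, IsUnit.val_inv_mul] using this
    · have : (y * x) * ((hu.unit⁻¹ : Rˣ) : R) = 0 := by rw [hyx, zero_mul]
      simpa [mul_assoc, IsUnit.mul_val_inv] using this
  · rintro ⟨hx, hu⟩
    refine ⟨hx, ?_⟩
    by_cases hinj : Function.Injective (fun z : R => x * z)
    · exfalso
      obtain ⟨y, hy⟩ := Finite.injective_iff_surjective.mp hinj 1
      exact hu (isUnit_of_mul_eq_one_finite hy)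
    · rw [Function.not_injective_iff] at hinj
      obtain ⟨a, b, hab, hne⟩ := hinj
      exact ⟨a - b, sub_ne_zero.mpr hne, Or.inl (by simp [mul_sub, hab])⟩

end Utils

section Numerator

variable {R : Type*} [Ring R] [Fintype R] [Nontrivial R] [DecidableEq R]

theorem ann_card_unit {x : R} (hu : IsUnit x) :
    Nat.card {α : R // α * x = 0 ∧ x * α = 0} = 1 := by
  have e : {α : R // α * x = 0 ∧ x * α = 0} ≃ {α : R // α = 0} := by
    refine Equiv.subtypeEquivRight fun α => ⟨fun h => ?_, fun h => by simp [h]⟩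
    have : (α * x) * ((hu.unit⁻¹ : Rˣ) : R) = 0 := by rw [h.1, zero_mul]
    simpa [mul_assoc, IsUnit.mul_val_inv] using this
  rw [Nat.card_congr e, Nat.card_eq_fintype_card, Fintype.card_subtype_eq]

theorem numerator_eq [DecidablePred (IsUnit (M := R))] :
    ((Nat.card R : ℚ) + (Nat.card Rˣ : ℚ) +
      ∑ᶠ x : {x : R // x ≠ 0 ∧ ∃ y ≠ (0 : R), x * y = 0 ∨ y * x = 0},
        (Nat.card {α : R // α * x.1 = 0 ∧ x.1 * α = 0} : ℚ)) =
    (Nat.card {p : R × R // p.1 * p.2 = 0 ∧ p.2 * p.1 = 0} : ℚ) := by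
  classical
  set h : R → ℕ := fun x => Nat.card {α : R // α * x = 0 ∧ x * α = 0} with hh
  have hN : Nat.card {p : R × R // p.1 * p.2 = 0 ∧ p.2 * p.1 = 0} = ∑ x : R, h x := by
    rw [Nat.card_eq_fintype_card,
      Fintype.card_congr (Equiv.subtypeProdEquivSigmaSubtype
        (fun a b : R => a * b = 0 ∧ b * a = 0)),
      Fintype.card_sigma]
    refine Finset.sum_congr rfl fun x _ => ?_
    simp only [hh, Nat.card_eq_fintype_card]
    exact Fintype.card_congr (Equiv.subtypeEquivRight fun b => and_comm)
  have h0 : h 0 = Nat.card R := by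
    rw [hh]
    exact Nat.card_congr (Equiv.subtypeUnivEquiv (by simp))
  have hfilter0 : (univ : Finset R).filter (fun x => x = 0) = {0} := by
    ext x; simp
  have hsum : ∑ x : R, h x = Nat.card R + (Nat.card Rˣ +
      ∑ x ∈ (univ : Finset R).filter (fun x => x ≠ 0 ∧ ¬ IsUnit x), h x) := by
    rw [← Finset.sum_filter_add_sum_filter_not univ (fun x => x = 0) h, hfilter0,
      Finset.sum_singleton, h0]
    congr 1
    rw [← Finset.sum_filter_add_sum_filter_not ((univ : Finset R).filter (fun x => ¬ x = 0))
      IsUnit h, Finset.filter_filter, Finset.filter_filter]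
    congr 1
    · have : ((univ : Finset R).filter (fun x => ¬ x = 0 ∧ IsUnit x)) =
          (univ : Finset R).filter IsUnit := by
        ext x
        simp only [Finset.mem_filter, Finset.mem_univ, true_and]
        exact ⟨fun h => h.2, fun h => ⟨h.ne_zero, h⟩⟩
      rw [this, Finset.sum_congr rfl (fun x hx => ann_card_unit (Finset.mem_filter.mp hx).2),
        Finset.sum_const, smul_eq_mul, mul_one, ← Fintype.card_subtype,
        ← Fintype.card_congr (unitsEquivIsUnit R), Nat.card_eq_fintype_card]
  have hzd : ((univ : Finset R).filter (fun x => x ≠ 0 ∧ ¬ IsUnit x)) =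
      (univ : Finset R).filter (fun x => x ≠ 0 ∧ ∃ y ≠ (0 : R), x * y = 0 ∨ y * x = 0) := by
    ext x
    simp only [Finset.mem_filter, Finset.mem_univ, true_and]
    exact (zd_iff_s10 (R := R)).symm
  have hfin : ∑ᶠ x : {x : R // x ≠ 0 ∧ ∃ y ≠ (0 : R), x * y = 0 ∨ y * x = 0},
      ((h x.1 : ℚ)) =
      ∑ x ∈ (univ : Finset R).filter
        (fun x => x ≠ 0 ∧ ∃ y ≠ (0 : R), x * y = 0 ∨ y * x = 0), (h x : ℚ) := by
    rw [finsum_eq_sum_of_fintype]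
    exact (Finset.sum_subtype
      (p := fun x : R => x ≠ 0 ∧ ∃ y ≠ (0 : R), x * y = 0 ∨ y * x = 0)
      _ (fun x => by simp) (fun x => (h x : ℚ))).symm
  rw [hfin, hN, hsum, hzd]
  push_cast
  ring

end Numerator

noncomputable section Counts

variable (F : Type*) [Field F] [Fintype F] [DecidableEq F]

theorem card_ne_zero_q : (Nat.card {a : F // a ≠ 0} : ℚ) = (Fintype.card F : ℚ) - 1 := by
  rw [← Nat.card_congr (unitsEquivNeZero (G₀ := F)), Nat.card_units,
    Nat.card_eq_fintype_card]
  have h1 : 1 ≤ Fintype.card F := Fintype.card_pos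
  push_cast [Nat.cast_sub h1]
  ring

def mulZeroEquiv : {u : F × F // u.1 * u.2 = 0} ≃ F ⊕ {a : F // a ≠ 0} where
  toFun u := if h : u.1.1 = 0 then Sum.inl u.1.2 else Sum.inr ⟨u.1.1, h⟩
  invFun s := Sum.elim (fun b => ⟨(0, b), by simp⟩) (fun a => ⟨(a.1, 0), by simp⟩) s
  left_inv u := by
    rcases u with ⟨⟨a, b⟩, h⟩
    by_cases ha : a = 0
    · simp only [ha, dif_pos]
      exact Subtype.ext (by simp [ha])
    · have hb : b = 0 := by
        rcases mul_eq_zero.mp h with h' | h'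
        · exact absurd h' ha
        · exact h'
      simp only [dif_neg ha]
      exact Subtype.ext (by simp [hb])
  right_inv s := by
    rcases s with b | ⟨a, ha⟩
    · simp
    · simp [ha]

theorem card_mulZero : (Nat.card {u : F × F // u.1 * u.2 = 0} : ℚ) =
    2 * (Fintype.card F : ℚ) - 1 := by
  rw [Nat.card_congr (mulZeroEquiv F), Nat.card_sum, Nat.cast_add, card_ne_zero_q F,
    Nat.card_eq_fintype_card]
  ring

theorem card_pairs_field : (Nat.card {p : F × F // p.1 * p.2 = 0 ∧ p.2 * p.1 = 0} : ℚ) =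
    2 * (Fintype.card F : ℚ) - 1 := by
  rw [Nat.card_congr (Equiv.subtypeEquivRight fun p : F × F =>
    (⟨fun h => h.1, fun h => ⟨h, by rw [mul_comm]; exact h⟩⟩ :
      (p.1 * p.2 = 0 ∧ p.2 * p.1 = 0) ↔ p.1 * p.2 = 0)), card_mulZero]

end Counts

noncomputable section MatrixCounts

variable (F : Type*) [Field F] [Fintype F] [DecidableEq F]

local notation "M2" => Matrix (Fin 2) (Fin 2) F

def matrixEquivProd : M2 ≃ F × F × F × F where
  toFun A := (A 0 0, A 0 1, A 1 0, A 1 1)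
  invFun v := !![v.1, v.2.1; v.2.2.1, v.2.2.2]
  left_inv A := (Matrix.eta_fin_two A).symm
  right_inv v := by simp

variable {F}

theorem adjugate_ne_zero {A : M2} (hA : A ≠ 0) : A.adjugate ≠ 0 := by
  intro h0
  apply hA
  rw [Matrix.adjugate_fin_two] at h0
  have h11 : A 1 1 = 0 := by
    have : (!![A 1 1, -A 0 1; -A 1 0, A 0 0] : M2) 0 0 = (0 : M2) 0 0 := by rw [h0]
    simpa using this
  have h01 : A 0 1 = 0 := by
    have : (!![A 1 1, -A 0 1; -A 1 0, A 0 0] : M2) 0 1 = (0 : M2) 0 1 := by rw [h0]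
    simpa [neg_eq_zero] using this
  have h10 : A 1 0 = 0 := by
    have : (!![A 1 1, -A 0 1; -A 1 0, A 0 0] : M2) 1 0 = (0 : M2) 1 0 := by rw [h0]
    simpa [neg_eq_zero] using this
  have h00 : A 0 0 = 0 := by
    have : (!![A 1 1, -A 0 1; -A 1 0, A 0 0] : M2) 1 1 = (0 : M2) 1 1 := by rw [h0]
    simpa using this
  rw [Matrix.eta_fin_two A, h00, h01, h10, h11]
  ext i j
  fin_cases i <;> fin_cases j <;> simp

theorem exists_smul_adjugate {A B : M2} (hA : A ≠ 0) (hdet : A.det = 0)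
    (hAB : A * B = 0) (hBA : B * A = 0) : ∃ t : F, B = t • A.adjugate := by
  have hD : A 0 0 * A 1 1 - A 0 1 * A 1 0 = 0 := by
    rw [← Matrix.det_fin_two]; exact hdet
  have hab : ∀ i j : Fin 2, A i 0 * B 0 j + A i 1 * B 1 j = 0 := by
    intro i j
    have : (A * B) i j = (0 : M2) i j := by rw [hAB]
    simpa [Matrix.mul_apply, Fin.sum_univ_two] using this
  have hba : ∀ i j : Fin 2, B i 0 * A 0 j + B i 1 * A 1 j = 0 := by
    intro i j
    have : (B * A) i j = (0 : M2) i j := by rw [hBA]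
    simpa [Matrix.mul_apply, Fin.sum_univ_two] using this
  have e1 := hab 0 0; have e2 := hab 0 1; have e3 := hab 1 0; have e4 := hab 1 1
  have f1 := hba 0 0; have f2 := hba 0 1; have f3 := hba 1 0; have f4 := hba 1 1
  -- find a nonzero entry of A
  have hentry : A 0 0 ≠ 0 ∨ A 0 1 ≠ 0 ∨ A 1 0 ≠ 0 ∨ A 1 1 ≠ 0 := by
    by_contra hc
    push_neg at hc
    obtain ⟨h1, h2, h3, h4⟩ := hc
    apply hA
    rw [Matrix.eta_fin_two A, h1, h2, h3, h4]
    ext i j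
    fin_cases i <;> fin_cases j <;> simp
  have key : ∀ (z s : F), z ≠ 0 → z • B = s • A.adjugate → ∃ t : F, B = t • A.adjugate := by
    intro z s hz hzs
    refine ⟨z⁻¹ * s, ?_⟩
    have := congrArg (fun C : M2 => z⁻¹ • C) hzs
    simpa [smul_smul, inv_mul_cancel₀ hz] using this
  rcases hentry with ha | hb | hc | hd
  · refine key (A 0 0) (B 1 1) ha ?_
    ext i j
    fin_cases i <;> fin_cases j <;>
      simp only [Fin.zero_eta, Fin.mk_one, Fin.isValue, Matrix.smul_apply,
        Matrix.adjugate_fin_two, Matrix.cons_val_zero, Matrix.cons_val_one, Matrix.head_cons,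
        Matrix.head_fin_const, Matrix.cons_val', Matrix.of_apply, Matrix.empty_val',
        Matrix.cons_val_fin_one, smul_eq_mul] <;>
      apply mul_left_cancel₀ ha
    · linear_combination A 0 0 * e1 - A 0 1 * f3 - B 1 1 * hD
    · linear_combination A 0 0 * e2
    · linear_combination A 0 0 * f3
    · linear_combination
  · refine key (A 0 1) (-(B 0 1)) hb ?_
    ext i j
    fin_cases i <;> fin_cases j <;>
      simp only [Fin.zero_eta, Fin.mk_one, Fin.isValue, Matrix.smul_apply,
        Matrix.adjugate_fin_two, Matrix.cons_val_zero, Matrix.cons_val_one, Matrix.head_cons,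
        Matrix.head_fin_const, Matrix.cons_val', Matrix.of_apply, Matrix.empty_val',
        Matrix.cons_val_fin_one, smul_eq_mul] <;>
      apply mul_left_cancel₀ hb
    · linear_combination A 0 1 * f2
    · linear_combination
    · linear_combination A 0 1 * f4 - A 1 1 * e2 + B 0 1 * hD
    · linear_combination A 0 1 * e2
  · refine key (A 1 0) (-(B 1 0)) hc ?_
    ext i j
    fin_cases i <;> fin_cases j <;>
      simp only [Fin.zero_eta, Fin.mk_one, Fin.isValue, Matrix.smul_apply,
        Matrix.adjugate_fin_two, Matrix.cons_val_zero, Matrix.cons_val_one, Matrix.head_cons,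
        Matrix.head_fin_const, Matrix.cons_val', Matrix.of_apply, Matrix.empty_val',
        Matrix.cons_val_fin_one, smul_eq_mul] <;>
      apply mul_left_cancel₀ hc
    · linear_combination A 1 0 * e3
    · linear_combination A 1 0 * e4 - A 1 1 * f3 + B 1 0 * hD
    · linear_combination
    · linear_combination A 1 0 * f3
  · refine key (A 1 1) (B 0 0) hd ?_
    ext i j
    fin_cases i <;> fin_cases j <;>
      simp only [Fin.zero_eta, Fin.mk_one, Fin.isValue, Matrix.smul_apply,
        Matrix.adjugate_fin_two, Matrix.cons_val_zero, Matrix.cons_val_one, Matrix.head_cons,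
        Matrix.head_fin_const, Matrix.cons_val', Matrix.of_apply, Matrix.empty_val',
        Matrix.cons_val_fin_one, smul_eq_mul] <;>
      apply mul_left_cancel₀ hd
    · linear_combination
    · linear_combination A 1 1 * f2
    · linear_combination A 1 1 * e3
    · linear_combination A 1 1 * e4 - A 1 1 * f1

end MatrixCounts

noncomputable section MatrixCounts2

variable {F : Type*} [Field F] [Fintype F] [DecidableEq F]

local notation "M2" => Matrix (Fin 2) (Fin 2) F

theorem ann_card_singular {A : M2} (hA : A ≠ 0) (hdet : A.det = 0) :
    Nat.card {B : M2 // A * B = 0 ∧ B * A = 0} = Fintype.card F := by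
  have hadj := adjugate_ne_zero hA
  obtain ⟨i, hi⟩ : ∃ i j, A.adjugate i j ≠ 0 := by
    by_contra hcon
    push_neg at hcon
    exact hadj (Matrix.ext_iff.mp (fun i j => by simpa using hcon i j))
  obtain ⟨j, hj⟩ := hi
  let f : F → {B : M2 // A * B = 0 ∧ B * A = 0} := fun t =>
    ⟨t • A.adjugate, by
      constructor
      · rw [Matrix.mul_smul, Matrix.mul_adjugate, hdet, zero_smul, smul_zero]
      · rw [Matrix.smul_mul, Matrix.adjugate_mul, hdet, zero_smul, smul_zero]⟩
  have hbij : Function.Bijective f := by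
    constructor
    · intro t s hts
      have h1 : (t • A.adjugate : M2) = s • A.adjugate := congrArg Subtype.val hts
      have h2 : t * A.adjugate i j = s * A.adjugate i j := by
        have := congrFun (congrFun h1 i) j
        simpa [Matrix.smul_apply, smul_eq_mul] using this
      exact mul_right_cancel₀ hj h2
    · rintro ⟨B, hAB, hBA⟩
      obtain ⟨t, ht⟩ := exists_smul_adjugate hA hdet hAB hBA
      exact ⟨t, Subtype.ext ht.symm⟩
  rw [Nat.card_congr (Equiv.ofBijective f hbij).symm, Nat.card_eq_fintype_card]

theorem ann_card_inv {A : M2} (hdet : A.det ≠ 0) :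
    Nat.card {B : M2 // A * B = 0 ∧ B * A = 0} = 1 := by
  have hu : IsUnit A := (Matrix.isUnit_iff_isUnit_det A).mpr (isUnit_iff_ne_zero.mpr hdet)
  have e : {B : M2 // A * B = 0 ∧ B * A = 0} ≃ {B : M2 // B = 0} := by
    refine Equiv.subtypeEquivRight fun B => ⟨fun h => ?_, fun h => by simp [h]⟩
    have h2 : A⁻¹ * (A * B) = 0 := by rw [h.1, mul_zero]
    rwa [← mul_assoc, Matrix.nonsing_inv_mul A (isUnit_iff_ne_zero.mpr hdet), one_mul] at h2
  rw [Nat.card_congr e, Nat.card_eq_fintype_card, Fintype.card_subtype_eq]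

theorem card_M2 : (Nat.card M2 : ℚ) = (Fintype.card F : ℚ) ^ 4 := by
  rw [Nat.card_congr (matrixEquivProd F), Nat.card_prod, Nat.card_prod, Nat.card_prod,
    Nat.card_eq_fintype_card]
  push_cast
  ring

def fiberNeZero (a : F) (ha : a ≠ 0) :
    F × F ≃ {w : F × F × F // a * w.2.2 = w.1 * w.2.1} where
  toFun p := ⟨(p.1, p.2, a⁻¹ * (p.1 * p.2)), by field_simp⟩
  invFun w := (w.1.1, w.1.2.1)
  left_inv p := rfl
  right_inv w := by
    obtain ⟨⟨b, c, d⟩, hw⟩ := w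
    refine Subtype.ext (Prod.ext rfl (Prod.ext rfl ?_))
    show a⁻¹ * (b * c) = d
    rw [← hw]
    field_simp

def fiberZero : {w : F × F × F // (0 : F) * w.2.2 = w.1 * w.2.1} ≃
    {u : F × F // u.1 * u.2 = 0} × F where
  toFun w := (⟨(w.1.1, w.1.2.1), by simpa [eq_comm] using w.2⟩, w.1.2.2)
  invFun p := ⟨(p.1.1.1, p.1.1.2, p.2), by simp [p.1.2]⟩
  left_inv w := rfl
  right_inv p := rfl

theorem card_quad : (Nat.card {v : F × F × F × F // v.1 * v.2.2.2 = v.2.1 * v.2.2.1} : ℚ) =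
    (Fintype.card F : ℚ) ^ 3 + (Fintype.card F : ℚ) ^ 2 - (Fintype.card F : ℚ) := by
  classical
  set q : ℚ := (Fintype.card F : ℚ) with hq
  have hsum : (Nat.card {v : F × F × F × F // v.1 * v.2.2.2 = v.2.1 * v.2.2.1} : ℚ) =
      ∑ a : F, (Nat.card {w : F × F × F // a * w.2.2 = w.1 * w.2.1} : ℚ) := by
    rw [Nat.card_eq_fintype_card,
      Fintype.card_congr (Equiv.subtypeProdEquivSigmaSubtype
        (fun (a : F) (w : F × F × F) => a * w.2.2 = w.1 * w.2.1)),
      Fintype.card_sigma]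
    push_cast [Nat.card_eq_fintype_card]
    rfl
  have hfib : ∀ a : F, (Nat.card {w : F × F × F // a * w.2.2 = w.1 * w.2.1} : ℚ) =
      if a = 0 then (2 * q - 1) * q else q ^ 2 := by
    intro a
    by_cases ha : a = 0
    · subst ha
      rw [if_pos rfl, Nat.card_congr (fiberZero (F := F)), Nat.card_prod, Nat.cast_mul,
        card_mulZero, Nat.card_eq_fintype_card]
    · rw [if_neg ha, ← Nat.card_congr (fiberNeZero a ha), Nat.card_prod,
        Nat.card_eq_fintype_card]
      push_cast
      ring
  rw [hsum]
  rw [Finset.sum_congr rfl (fun a _ => hfib a), Finset.sum_ite, Finset.sum_const,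
    Finset.sum_const]
  have h1 : ((Finset.univ : Finset F).filter (fun a => a = 0)).card = 1 := by
    rw [show ((Finset.univ : Finset F).filter (fun a => a = 0)) = {0} by ext x; simp]
    rfl
  have h2 : (((Finset.univ : Finset F).filter (fun a => ¬ a = 0)).card : ℚ) = q - 1 := by
    rw [← Fintype.card_subtype, ← Nat.card_eq_fintype_card]
    exact card_ne_zero_q F
  rw [h1]
  simp only [nsmul_eq_mul, h2, Nat.cast_one]
  ring

theorem card_det_zero : (Nat.card {A : M2 // A.det = 0} : ℚ) =
    (Fintype.card F : ℚ) ^ 3 + (Fintype.card F : ℚ) ^ 2 - (Fintype.card F : ℚ) := by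
  have e : {A : M2 // A.det = 0} ≃
      {v : F × F × F × F // v.1 * v.2.2.2 = v.2.1 * v.2.2.1} := by
    refine Equiv.subtypeEquiv (matrixEquivProd F) fun A => ?_
    rw [Matrix.det_fin_two, sub_eq_zero]
    rfl
  rw [Nat.card_congr e, card_quad]

end MatrixCounts2

noncomputable section Assembly

variable {F : Type*} [Field F] [Fintype F] [DecidableEq F]

local notation "M2" => Matrix (Fin 2) (Fin 2) F

theorem card_pairs_M2 :
    (Nat.card {p : M2 × M2 // p.1 * p.2 = 0 ∧ p.2 * p.1 = 0} : ℚ) =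
    3 * (Fintype.card F : ℚ) ^ 4 - 2 * (Fintype.card F : ℚ) ^ 2 := by
  classical
  set q : ℚ := (Fintype.card F : ℚ) with hq
  have hsum : (Nat.card {p : M2 × M2 // p.1 * p.2 = 0 ∧ p.2 * p.1 = 0} : ℚ) =
      ∑ A : M2, (Nat.card {B : M2 // A * B = 0 ∧ B * A = 0} : ℚ) := by
    rw [Nat.card_eq_fintype_card,
      Fintype.card_congr (Equiv.subtypeProdEquivSigmaSubtype
        (fun (A B : M2) => A * B = 0 ∧ B * A = 0)),
      Fintype.card_sigma]
    push_cast [Nat.card_eq_fintype_card]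
    rfl
  have hfib : ∀ A : M2, (Nat.card {B : M2 // A * B = 0 ∧ B * A = 0} : ℚ) =
      if A.det = 0 then (if A = 0 then q ^ 4 else q) else 1 := by
    intro A
    by_cases hdet : A.det = 0
    · by_cases hA : A = 0
      · subst hA
        rw [if_pos hdet, if_pos rfl]
        have e : {B : M2 // (0 : M2) * B = 0 ∧ B * (0 : M2) = 0} ≃ M2 :=
          Equiv.subtypeUnivEquiv (by simp)
        rw [Nat.card_congr e, card_M2]
      · rw [if_pos hdet, if_neg hA, ann_card_singular hA hdet]
    · rw [if_neg hdet, ann_card_inv hdet, Nat.cast_one]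
  -- the singular set
  set s : Finset M2 := Finset.univ.filter (fun A : M2 => A.det = 0) with hs
  have h0s : (0 : M2) ∈ s := by simp [hs]
  have hscard : (s.card : ℚ) = q ^ 3 + q ^ 2 - q := by
    rw [hs, ← Fintype.card_subtype, ← Nat.card_eq_fintype_card]
    exact card_det_zero
  have hscard1 : (1 : ℕ) ≤ s.card := Finset.card_pos.mpr ⟨0, h0s⟩
  have htot : ((Finset.univ.filter (fun A : M2 => ¬ A.det = 0)).card : ℚ) = q ^ 4 - (s.card : ℚ) := by
    have := Finset.card_filter_add_card_filter_not
      (s := (Finset.univ : Finset M2)) (p := fun A : M2 => A.det = 0)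
    have hcard : ((Finset.univ : Finset M2).card : ℚ) = q ^ 4 := by
      rw [Finset.card_univ, ← Nat.card_eq_fintype_card]
      exact card_M2
    have hcast := congrArg (fun n : ℕ => (n : ℚ)) this
    push_cast at hcast
    rw [hcard] at hcast
    linarith [hcast]
  rw [hsum, Finset.sum_congr rfl (fun A _ => hfib A), Finset.sum_ite, Finset.sum_const,
    nsmul_eq_mul, htot]
  have hinner : ∑ A ∈ s, (if A = 0 then q ^ 4 else q) = q ^ 4 + ((s.card : ℚ) - 1) * q := by
    rw [← Finset.add_sum_erase s _ h0s, if_pos rfl]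
    congr 1
    rw [Finset.sum_congr rfl (fun A hA => if_neg (Finset.mem_erase.mp hA).1),
      Finset.sum_const, nsmul_eq_mul, Finset.card_erase_of_mem h0s]
    push_cast [Nat.cast_sub hscard1]
    ring
  rw [show Finset.univ.filter (fun A : M2 => A.det = 0) = s from rfl, hinner, hscard]
  ring

end Assembly

section Glue

theorem card_pairs_congr {R S : Type*} [Ring R] [Ring S] (e : R ≃+* S) :
    Nat.card {p : R × R // p.1 * p.2 = 0 ∧ p.2 * p.1 = 0} =
    Nat.card {p : S × S // p.1 * p.2 = 0 ∧ p.2 * p.1 = 0} := by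
  refine Nat.card_congr (Equiv.subtypeEquiv (e.toEquiv.prodCongr e.toEquiv) fun p => ?_)
  show _ ↔ (e p.1 * e p.2 = 0 ∧ e p.2 * e p.1 = 0)
  constructor
  · rintro ⟨h1, h2⟩
    exact ⟨by rw [← map_mul, h1, map_zero], by rw [← map_mul, h2, map_zero]⟩
  · rintro ⟨h1, h2⟩
    exact ⟨e.injective (by rw [map_mul, h1, map_zero]),
      e.injective (by rw [map_mul, h2, map_zero])⟩

def pairsProdEquiv (A B : Type*) [Ring A] [Ring B] :
    {p : (A × B) × (A × B) // p.1 * p.2 = 0 ∧ p.2 * p.1 = 0} ≃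
    {p : A × A // p.1 * p.2 = 0 ∧ p.2 * p.1 = 0} ×
      {p : B × B // p.1 * p.2 = 0 ∧ p.2 * p.1 = 0} where
  toFun x :=
    (⟨(x.1.1.1, x.1.2.1),
      ⟨by have := congrArg Prod.fst x.2.1; simpa using this,
       by have := congrArg Prod.fst x.2.2; simpa using this⟩⟩,
     ⟨(x.1.1.2, x.1.2.2),
      ⟨by have := congrArg Prod.snd x.2.1; simpa using this,
       by have := congrArg Prod.snd x.2.2; simpa using this⟩⟩)
  invFun y :=
    ⟨((y.1.1.1, y.2.1.1), (y.1.1.2, y.2.1.2)),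
     ⟨by
        have h1 := y.1.2.1; have h2 := y.2.2.1
        exact Prod.ext (by simpa using h1) (by simpa using h2),
      by
        have h1 := y.1.2.2; have h2 := y.2.2.2
        exact Prod.ext (by simpa using h1) (by simpa using h2)⟩⟩
  left_inv x := rfl
  right_inv y := rfl

theorem card_pairs_prod (A B : Type*) [Ring A] [Ring B] :
    Nat.card {p : (A × B) × (A × B) // p.1 * p.2 = 0 ∧ p.2 * p.1 = 0} =
    Nat.card {p : A × A // p.1 * p.2 = 0 ∧ p.2 * p.1 = 0} *
      Nat.card {p : B × B // p.1 * p.2 = 0 ∧ p.2 * p.1 = 0} := by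
  rw [Nat.card_congr (pairsProdEquiv A B), Nat.card_prod]

end Glue

theorem two_sided_prob_FS3 (F : Type*) [Field F] [Fintype F]
    (h : Nat.gcd (Fintype.card F) 6 = 1)
    (iso : MonoidAlgebra F (Equiv.Perm (Fin 3)) ≃+*
      F × F × Matrix (Fin 2) (Fin 2) F) :
    ((Nat.card (MonoidAlgebra F (Equiv.Perm (Fin 3))) : ℚ) +
        (Nat.card (MonoidAlgebra F (Equiv.Perm (Fin 3)))ˣ : ℚ) +
        ∑ᶠ x : {x : MonoidAlgebra F (Equiv.Perm (Fin 3)) //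
            x ≠ 0 ∧ ∃ y ≠ (0 : MonoidAlgebra F (Equiv.Perm (Fin 3))),
              x * y = 0 ∨ y * x = 0},
          (Nat.card {α : MonoidAlgebra F (Equiv.Perm (Fin 3)) //
              α * x.1 = 0 ∧ x.1 * α = 0} : ℚ)) /
      (Nat.card (MonoidAlgebra F (Equiv.Perm (Fin 3))) : ℚ) ^ 2 =
    ((2 * (Fintype.card F : ℚ) - 1) / (Fintype.card F : ℚ) ^ 2) ^ 2 *
      ((3 * (Fintype.card F : ℚ) ^ 2 - 2) / (Fintype.card F : ℚ) ^ 6) := by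
  classical
  set R := MonoidAlgebra F (Equiv.Perm (Fin 3)) with hR
  set q : ℚ := (Fintype.card F : ℚ) with hq
  haveI : Finite R := Finite.of_equiv _ iso.toEquiv.symm
  letI : Fintype R := Fintype.ofFinite R
  haveI : Nontrivial R := iso.toEquiv.nontrivial
  have hq0 : q ≠ 0 := by
    rw [hq]
    exact_mod_cast Fintype.card_ne_zero
  rw [numerator_eq]
  have hNR : (Nat.card {p : R × R // p.1 * p.2 = 0 ∧ p.2 * p.1 = 0} : ℚ) =
      (2 * q - 1) * ((2 * q - 1) * (3 * q ^ 4 - 2 * q ^ 2)) := by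
    rw [card_pairs_congr iso, card_pairs_prod, card_pairs_prod]
    push_cast
    rw [card_pairs_field, card_pairs_M2]
  have hcard : (Nat.card R : ℚ) = q ^ 6 := by
    rw [Nat.card_congr iso.toEquiv, Nat.card_prod, Nat.card_prod]
    push_cast
    rw [card_M2, Nat.card_eq_fintype_card]
    ring
  rw [hNR, hcard]
  field_simp
end
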